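/- Let λ > 0, A > 1, and (θ_n) a real sequence. With α_0 = A and α_{n+1} = λ^{-1/(n+1)}·(λα_n^{n+1} + ⟨θ_{n+1} − λα_n^{n+1}⟩)^{1/(n+1)}, the sequence (α_n) converges to a limit α satisfying A ≤ α ≤ A + A/(λ(A−1)), and for every m ≥ 1, the fractional part ⟨λα^m − θ_m⟩ is at most 1/(A−1). -/

import Mathlib

open Filter Finset

/-!
Put `δₙ = ⟨θₙ₊₁ - λαₙⁿ⁺¹⟩ ∈ [0, 1)`. The recursion says exactly `αₙ₊₁ⁿ⁺¹ = αₙⁿ⁺¹ + δₙ/λ`, so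
`(αₙ)` is increasing, `αₙ ≥ A`, and `λαₘᵐ - θₘ = -⌊θₘ - λαₘ₋₁ᵐ⌋` is an integer. Comparing `m`-th
powers through `(n+1)`-th powers gives `αₙ₊₁ᵐ - αₙᵐ ≤ A^{m-n-1}/λ` for `m ≤ n + 1`; summing the
geometric series yields `αₘᵐ ≤ αᵐ ≤ αₘᵐ + 1/(λ(A-1))`, so `λαᵐ - θₘ` exceeds an integer by at most
`1/(A-1)`.
-/

theorem Real.rpow_neg_inv_mul_rpow_inv_pow {lam y : ℝ} (hlam : 0 < lam) (hy : 0 ≤ y) (n : ℕ) :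
    (lam ^ (-(1 / (n + 1 : ℝ))) * y ^ (1 / (n + 1 : ℝ))) ^ (n + 1) = y / lam := by
  have hn : ((n + 1 : ℕ) : ℝ) = n + 1 := by push_cast; ring
  rw [mul_pow, one_div, ← hn, Real.rpow_neg hlam.le, inv_pow,
    Real.rpow_inv_natCast_pow hlam.le n.succ_ne_zero, Real.rpow_inv_natCast_pow hy n.succ_ne_zero,
    div_eq_inv_mul]

theorem Int.fract_le_sub_of_fract_eq_zero {R : Type*} [Ring R] [LinearOrder R]
    [IsStrictOrderedRing R] [FloorRing R] {x y : R} (hy : Int.fract y = 0) (h : y ≤ x) :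
    Int.fract x ≤ x - y := by
  obtain ⟨k, rfl⟩ := Int.fract_eq_zero_iff.1 hy
  rw [Int.fract]
  gcongr
  exact_mod_cast Int.le_floor.2 h

theorem le_add_div_one_sub_of_le_add_mul_pow {K : Type*} [Field K] [LinearOrder K]
    [IsStrictOrderedRing K] {u : ℕ → K} {c r : K} (hc : 0 ≤ c) (hr₀ : 0 ≤ r) (hr₁ : r < 1)
    (hu : ∀ i, u (i + 1) ≤ u i + c * r ^ i) (k : ℕ) : u k ≤ u 0 + c / (1 - r) := by
  have hsum : u k - u 0 ≤ c * ∑ i ∈ range k, r ^ i := by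
    rw [← sum_range_sub u k, mul_sum]
    gcongr with i
    linarith [hu i]
  have hgeom : ∑ i ∈ range k, r ^ i ≤ 1 / (1 - r) := by
    simpa only [range_eq_Ico, pow_zero] using geom_sum_Ico_le_of_lt_one (m := 0) (n := k) hr₀ hr₁
  have := mul_le_mul_of_nonneg_left hgeom hc
  rw [mul_one_div] at this
  linarith

theorem pow_le_pow_add_mul_inv_pow {x y d c A : ℝ} {m k n : ℕ} (hA : 0 < A) (hAx : A ≤ x)
    (hxy : x ≤ y) (hc : 0 ≤ c) (hmk : m + k = n) (hy : y ^ n = x ^ n + d) (hdc : d ≤ c) :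
    y ^ m ≤ x ^ m + c * A⁻¹ ^ k := by
  subst hmk
  have hx : 0 < x := hA.trans_le hAx
  have hc' : c ≤ c * A⁻¹ ^ k * x ^ k := by
    rw [mul_assoc, ← mul_pow, inv_mul_eq_div]
    exact le_mul_of_one_le_right hc (one_le_pow₀ ((one_le_div hA).2 hAx))
  refine le_of_mul_le_mul_right ?_ (pow_pos hx k)
  calc y ^ m * x ^ k ≤ y ^ m * y ^ k := by gcongr; exact pow_nonneg (hx.le.trans hxy) m
    _ = x ^ m * x ^ k + d := by rw [← pow_add, hy, pow_add]
    _ ≤ (x ^ m + c * A⁻¹ ^ k) * x ^ k := by linarith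

section PowSuccEqAdd

variable {α e : ℕ → ℝ}

theorem monotone_of_pow_succ_eq_add (hα : ∀ n, 0 ≤ α n) (he : ∀ n, 0 ≤ e n)
    (hstep : ∀ n, α (n + 1) ^ (n + 1) = α n ^ (n + 1) + e n) : Monotone α :=
  monotone_nat_of_le_succ fun n =>
    (pow_le_pow_iff_left₀ (hα n) (hα (n + 1)) n.add_one_ne_zero).1
      (by rw [hstep n]; linarith [he n])

variable {A c : ℝ}

theorem le_add_of_pow_succ_eq_add (hA : 1 < A) (hαA : ∀ n, A ≤ α n) (hmono : Monotone α)
    (hstep : ∀ n, α (n + 1) ^ (n + 1) = α n ^ (n + 1) + e n) (hc : 0 ≤ c) (hec : ∀ n, e n ≤ c)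
    (n : ℕ) : α n ≤ α 0 + c * A / (A - 1) := by
  have hA₀ : 0 < A := zero_lt_one.trans hA
  have hu : ∀ i, α (i + 1) ≤ α i + c * A⁻¹ ^ i := fun i => by
    simpa using pow_le_pow_add_mul_inv_pow hA₀ (hαA i) (hmono i.le_succ) hc (add_comm 1 i)
      (hstep i) (hec i)
  have := le_add_div_one_sub_of_le_add_mul_pow hc (inv_nonneg.2 hA₀.le)
    (inv_lt_one_of_one_lt₀ hA) hu n
  rwa [show c / (1 - A⁻¹) = c * A / (A - 1) by field_simp] at this

theorem pow_add_le_of_pow_succ_eq_add (hA : 1 < A) (hαA : ∀ n, A ≤ α n) (hmono : Monotone α)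
    (hstep : ∀ n, α (n + 1) ^ (n + 1) = α n ^ (n + 1) + e n) (hc : 0 ≤ c) (hec : ∀ n, e n ≤ c)
    (m i : ℕ) : α (m + i) ^ m ≤ α m ^ m + c / (A - 1) := by
  have hA₀ : 0 < A := zero_lt_one.trans hA
  have hu : ∀ i, α (m + (i + 1)) ^ m ≤ α (m + i) ^ m + c * A⁻¹ * A⁻¹ ^ i := fun i => by
    rw [mul_assoc, ← pow_succ']
    exact pow_le_pow_add_mul_inv_pow hA₀ (hαA _) (hmono (m + i).le_succ) hc rfl (hstep _) (hec _)
  have := le_add_div_one_sub_of_le_add_mul_pow (u := fun i => α (m + i) ^ m)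
    (by positivity) (inv_nonneg.2 hA₀.le) (inv_lt_one_of_one_lt₀ hA) hu i
  rwa [show c * A⁻¹ / (1 - A⁻¹) = c / (A - 1) by field_simp] at this

theorem pow_le_pow_add_of_tendsto {a : ℝ} (hA : 1 < A) (hαA : ∀ n, A ≤ α n)
    (hmono : Monotone α) (hstep : ∀ n, α (n + 1) ^ (n + 1) = α n ^ (n + 1) + e n) (hc : 0 ≤ c)
    (hec : ∀ n, e n ≤ c) (hlim : Tendsto α atTop (nhds a)) (m : ℕ) :
    a ^ m ≤ α m ^ m + c / (A - 1) := by
  refine le_of_tendsto (hlim.pow m) (eventually_atTop.2 ⟨m, fun N hN => ?_⟩)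
  obtain ⟨i, rfl⟩ := Nat.exists_eq_add_of_le hN
  exact pow_add_le_of_pow_succ_eq_add hA hαA hmono hstep hc hec m i

end PowSuccEqAdd

noncomputable def fractRootStep (lam t : ℝ) (n : ℕ) (x : ℝ) : ℝ :=
  lam ^ (-(1 / (n + 1 : ℝ))) *
    (lam * x ^ (n + 1) + Int.fract (t - lam * x ^ (n + 1))) ^ (1 / (n + 1 : ℝ))

section FractRootStep

variable {lam t x : ℝ} {n : ℕ}

theorem fractRootStep_nonneg (hlam : 0 ≤ lam) (hx : 0 ≤ x) : 0 ≤ fractRootStep lam t n x :=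
  mul_nonneg (Real.rpow_nonneg hlam _)
    (Real.rpow_nonneg (add_nonneg (by positivity) (Int.fract_nonneg _)) _)

theorem fractRootStep_pow (hlam : 0 < lam) (hx : 0 ≤ x) :
    fractRootStep lam t n x ^ (n + 1) = x ^ (n + 1) + Int.fract (t - lam * x ^ (n + 1)) / lam := by
  rw [fractRootStep, Real.rpow_neg_inv_mul_rpow_inv_pow hlam
    (add_nonneg (by positivity) (Int.fract_nonneg _)), add_div, mul_div_cancel_left₀ _ hlam.ne']

theorem fract_mul_fractRootStep_pow_sub (hlam : 0 < lam) (hx : 0 ≤ x) :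
    Int.fract (lam * fractRootStep lam t n x ^ (n + 1) - t) = 0 := by
  have : lam * fractRootStep lam t n x ^ (n + 1) - t = ((-⌊t - lam * x ^ (n + 1)⌋ : ℤ) : ℝ) := by
    rw [fractRootStep_pow hlam hx, mul_add, mul_div_cancel₀ _ hlam.ne', Int.fract]
    push_cast
    ring
  rw [this, Int.fract_intCast]

end FractRootStep

theorem alpha_seq_converges_and_fract_bound
    (lam A : ℝ) (hlam : 0 < lam) (hA : 1 < A)
    (θ : ℕ → ℝ) (α : ℕ → ℝ)
    (h0 : α 0 = A)
    (hrec : ∀ n : ℕ, α (n + 1) =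
      lam ^ (-(1 / (n + 1 : ℝ))) *
        (lam * α n ^ (n + 1) +
          Int.fract (θ (n + 1) - lam * α n ^ (n + 1))) ^ (1 / (n + 1 : ℝ))) :
    ∃ a : ℝ, Tendsto α atTop (nhds a) ∧
      A ≤ a ∧ a ≤ A + A / (lam * (A - 1)) ∧
      ∀ m : ℕ, 1 ≤ m → Int.fract (lam * a ^ m - θ m) ≤ 1 / (A - 1) := by
  have hA₀ : 0 < A := zero_lt_one.trans hA
  have hrec' (n : ℕ) : α (n + 1) = fractRootStep lam (θ (n + 1)) n (α n) := hrec n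
  have hα (n : ℕ) : 0 ≤ α n := by
    induction n with
    | zero => exact h0 ▸ hA₀.le
    | succ n ih => exact hrec' n ▸ fractRootStep_nonneg hlam.le ih
  have hstep (n : ℕ) := hrec' n ▸ fractRootStep_pow (t := θ (n + 1)) hlam (hα n)
  have hδ (n : ℕ) : Int.fract (θ (n + 1) - lam * α n ^ (n + 1)) / lam ≤ 1 / lam := by
    gcongr; exact (Int.fract_lt_one _).le
  have hc : 0 ≤ 1 / lam := by positivity
  have hmono := monotone_of_pow_succ_eq_add hα (fun n => div_nonneg (Int.fract_nonneg _) hlam.le)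
    hstep
  have hαA (n : ℕ) : A ≤ α n := h0 ▸ hmono n.zero_le
  have hub (n : ℕ) : α n ≤ A + A / (lam * (A - 1)) := by
    have := le_add_of_pow_succ_eq_add hA hαA hmono hstep hc hδ n
    rwa [h0, show 1 / lam * A / (A - 1) = A / (lam * (A - 1)) by field_simp] at this
  obtain ⟨a, hlim⟩ : ∃ a, Tendsto α atTop (nhds a) :=
    ⟨_, tendsto_atTop_ciSup hmono ⟨_, Set.forall_mem_range.2 hub⟩⟩
  refine ⟨a, hlim, ge_of_tendsto' hlim hαA, le_of_tendsto' hlim hub, fun m hm => ?_⟩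
  obtain ⟨k, rfl⟩ := Nat.exists_eq_add_of_le' hm
  have hint := hrec' k ▸ fract_mul_fractRootStep_pow_sub (t := θ (k + 1)) hlam (hα k)
  have hupp := pow_le_pow_add_of_tendsto hA hαA hmono hstep hc hδ hlim (k + 1)
  calc Int.fract (lam * a ^ (k + 1) - θ (k + 1))
      ≤ lam * a ^ (k + 1) - θ (k + 1) - (lam * α (k + 1) ^ (k + 1) - θ (k + 1)) :=
        Int.fract_le_sub_of_fract_eq_zero hint
          (by gcongr; exacts [hα _, hmono.ge_of_tendsto hlim _])
    _ ≤ lam * (1 / lam / (A - 1)) := by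
        rw [sub_sub_sub_cancel_right, ← mul_sub]; gcongr; linarith
    _ = 1 / (A - 1) := by field_simp
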